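/- arXiv:1410.3339 — 2 statements merged into one kernel-verified Lean document; each statement's English description precedes it below -/
import Mathlib

section
/- Let X be a compact topological space and F a norm-bounded subset of C(X) that is relatively weakly compact in C(X). Then every sequence in F has a subsequence that converges pointwise in ℝ^X. -/
open Filter Topology

/-- The identity map from `C(X, ℝ)` to itself equipped with the weak topology. -/
noncomputable def toWeak {X : Type*} [TopologicalSpace X] [CompactSpace X] :
    C(X, ℝ) → WeakSpace ℝ C(X, ℝ) := fun f => f

/-- The identity map back from the weak topology to `C(X, ℝ)`. -/
noncomputable def ofW {X : Type*} [TopologicalSpace X] [CompactSpace X] :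
    WeakSpace ℝ C(X, ℝ) → C(X, ℝ) := fun f => f

lemma eval_continuous_weak {X : Type*} [TopologicalSpace X] [CompactSpace X] (x : X) :
    Continuous fun w : WeakSpace ℝ C(X, ℝ) => ofW w x :=
  WeakBilin.eval_continuous ((topDualPairing ℝ C(X, ℝ)).flip)
      (ContinuousMap.evalCLM ℝ x)

/-- If `h` is a weak cluster point of a sequence `s` in `C(X,ℝ)`, then (i) `h x` is a
cluster point of the values at `x`, and (ii) `h` is constant on fibers of the sampling map. -/
lemma cluster_eval {X : Type*} [TopologicalSpace X] [CompactSpace X]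
    {s : ℕ → C(X, ℝ)} {h : WeakSpace ℝ C(X, ℝ)}
    (hc : MapClusterPt h atTop fun j => toWeak (s j)) :
    (∀ x : X, MapClusterPt (ofW h x) atTop fun j => s j x) ∧
      ∀ x y : X, (∀ j, s j x = s j y) → ofW h x = ofW h y := by
  set L : Filter (WeakSpace ℝ C(X, ℝ)) := map (fun j => toWeak (s j)) atTop with hL
  have hne : (𝓝 h ⊓ L).NeBot := hc
  have key : ∀ x : X, Tendsto (fun w => ofW w x) (𝓝 h ⊓ L) (𝓝 (ofW h x)) :=
    fun x => ((eval_continuous_weak x).tendsto h).mono_left inf_le_left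
  have hmap : ∀ x : X, map (fun w => ofW w x) (𝓝 h ⊓ L) ≤ map (fun j => s j x) atTop := by
    intro x
    calc map (fun w => ofW w x) (𝓝 h ⊓ L) ≤ map (fun w => ofW w x) L :=
          map_mono inf_le_right
      _ = map (fun j => s j x) atTop := by rw [hL, map_map]; rfl
  constructor
  · intro x
    exact Filter.neBot_of_le (le_inf (key x) (hmap x))
  · intro x y hxy
    have heq : (fun w : WeakSpace ℝ C(X, ℝ) => ofW w x) =ᶠ[𝓝 h ⊓ L]
        fun w => ofW w y := by
      refine mem_inf_of_right (mem_of_superset range_mem_map ?_)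
      rintro _ ⟨j, rfl⟩
      exact hxy j
    exact tendsto_nhds_unique ((key x).congr' heq) (key y)

/-- A cluster point of a convergent sequence is the limit. -/
lemma mapClusterPt_eq_of_tendsto {α : Type*} [TopologicalSpace α] [T2Space α]
    {u : ℕ → α} {a b : α} (hc : MapClusterPt a atTop u)
    (ht : Tendsto u atTop (𝓝 b)) : a = b := by
  have hne : (𝓝 a ⊓ map u atTop).NeBot := hc
  exact eq_of_nhds_neBot (Filter.neBot_of_le (inf_le_inf_left _ ht))

/-- Two continuous functions constant on fibers of the sampling map, agreeing on a
sequence whose samples are dense, agree everywhere. -/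
lemma eq_on_all {X : Type*} [TopologicalSpace X] [CompactSpace X] [T2Space X]
    {f : ℕ → C(X, ℝ)} {u : ℕ → X} (g h : C(X, ℝ))
    (hfibg : ∀ x y : X, (∀ n, f n x = f n y) → g x = g y)
    (hfibh : ∀ x y : X, (∀ n, f n x = f n y) → h x = h y)
    (huk : ∀ k, g (u k) = h (u k))
    (hdense : ∀ x : X, ∃ km : ℕ → ℕ,
      ∀ n, Tendsto (fun m => f n (u (km m))) atTop (𝓝 (f n x)))
    (x : X) : g x = h x := by
  obtain ⟨km, hkm⟩ := hdense x
  obtain ⟨x', hx'⟩ := exists_clusterPt_of_compactSpace (map (fun m => u (km m)) atTop)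
  set M : Filter X := 𝓝 x' ⊓ map (fun m => u (km m)) atTop with hM
  have hne : M.NeBot := hx'
  have hgx' : Tendsto g M (𝓝 (g x')) := (g.continuous.tendsto x').mono_left inf_le_left
  have hhx' : Tendsto h M (𝓝 (h x')) := (h.continuous.tendsto x').mono_left inf_le_left
  have heq : (g : X → ℝ) =ᶠ[M] (h : X → ℝ) := by
    refine mem_inf_of_right (mem_of_superset range_mem_map ?_)
    rintro _ ⟨m, rfl⟩
    exact huk (km m)
  have hx'x : ∀ n, f n x' = f n x := by
    intro n
    have h1 : Tendsto (f n) M (𝓝 (f n x')) :=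
      ((f n).continuous.tendsto x').mono_left inf_le_left
    have h2 : map (f n) M ≤ 𝓝 (f n x) := by
      calc map (f n) M ≤ map (f n) (map (fun m => u (km m)) atTop) := map_mono inf_le_right
        _ = map (fun m => f n (u (km m))) atTop := map_map
        _ ≤ 𝓝 (f n x) := hkm n
    exact eq_of_nhds_neBot (Filter.neBot_of_le (le_inf h1 h2))
  calc g x = g x' := hfibg x x' fun n => (hx'x n).symm
    _ = h x' := tendsto_nhds_unique (hgx'.congr' heq) hhx'
    _ = h x := hfibh x' x hx'x

/-- If `F ⊆ C(X)` is norm-bounded and relatively weakly compact, then every sequence in `F`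
has a pointwise convergent subsequence. -/
theorem relatively_weakly_compact_implies_rsc
    {X : Type*} [TopologicalSpace X] [CompactSpace X] [T2Space X]
    (F : Set C(X, ℝ))
    (hbdd : ∃ r : ℝ, ∀ f ∈ F, ‖f‖ ≤ r)
    (hwc : IsCompact (closure (toWeak '' F))) :
    ∀ f : ℕ → C(X, ℝ), (∀ n, f n ∈ F) →
      ∃ (φ : ℕ → ℕ) (g : X → ℝ), StrictMono φ ∧
        ∀ x, Tendsto (fun k => f (φ k) x) atTop (𝓝 (g x)) := by
  intro f hf
  rcases isEmpty_or_nonempty X with hX | hX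
  · exact ⟨id, fun _ => 0, strictMono_id, fun x => isEmptyElim x⟩
  obtain ⟨r, hr⟩ := hbdd
  set ι : X → ℕ → ℝ := fun x n => f n x with hι
  -- a sequence of sample points whose `ι`-images are dense in the range of `ι`
  have hne : Nonempty ↥(Set.range ι) := ⟨⟨ι hX.some, Set.mem_range_self _⟩⟩
  obtain ⟨v, hv⟩ := TopologicalSpace.exists_dense_seq ↥(Set.range ι)
  choose u hu using fun k => (v k).2
  -- pointwise bounds
  have hbound : ∀ n y, f n y ∈ Set.Icc (-r) r := by
    intro n y
    have h1 : |f n y| ≤ ‖f n‖ := by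
      simpa [Real.norm_eq_abs] using (f n).norm_coe_le_norm y
    have h2 := hr (f n) (hf n)
    exact abs_le.mp (h1.trans h2)
  -- extract a subsequence converging at every sample point
  have hcomp : IsCompact (Set.pi Set.univ fun _ : ℕ => Set.Icc (-r) r) :=
    isCompact_univ_pi fun _ => isCompact_Icc
  obtain ⟨a, -, φ, hφ, ha⟩ := hcomp.tendsto_subseq (x := fun n k => f n (u k))
      fun n => Set.mem_univ_pi.mpr fun k => hbound n (u k)
  have hak : ∀ k, Tendsto (fun j => f (φ j) (u k)) atTop (𝓝 (a k)) :=
    fun k => tendsto_pi_nhds.mp ha k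
  -- density of samples
  have hdense : ∀ x : X, ∃ km : ℕ → ℕ,
      ∀ n, Tendsto (fun m => f n (u (km m))) atTop (𝓝 (f n x)) := by
    intro x
    obtain ⟨w, hw_mem, hw_lim⟩ := mem_closure_iff_seq_limit.mp
      (hv (⟨ι x, Set.mem_range_self x⟩ : ↥(Set.range ι)))
    choose km hkm using hw_mem
    have h1 : Tendsto (fun m => ((w m : ↥(Set.range ι)) : ℕ → ℝ)) atTop (𝓝 (ι x)) :=
      (continuous_subtype_val.tendsto _).comp hw_lim
    have h2 : Tendsto (fun m => ι (u (km m))) atTop (𝓝 (ι x)) := by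
      have : (fun m => ι (u (km m))) = fun m => ((w m : ↥(Set.range ι)) : ℕ → ℝ) := by
        funext m
        rw [hu, hkm]
      rw [this]; exact h1
    exact ⟨km, fun n => tendsto_pi_nhds.mp h2 n⟩
  -- weak cluster points
  have hmemK : ∀ j, toWeak (f j) ∈ closure (toWeak '' F) :=
    fun j => subset_closure ⟨f j, hf j, rfl⟩
  have getcluster : ∀ ns : ℕ → ℕ, ∃ h : WeakSpace ℝ C(X, ℝ),
      MapClusterPt h atTop fun j => toWeak (f (φ (ns j))) := by
    intro ns
    have hle : map (fun j => toWeak (f (φ (ns j)))) atTop ≤ 𝓟 (closure (toWeak '' F)) :=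
      le_principal_iff.mpr (mem_map.mpr (Eventually.of_forall fun j => hmemK (φ (ns j))))
    obtain ⟨h, -, hc⟩ := hwc.exists_clusterPt hle
    exact ⟨h, hc⟩
  have hval : ∀ (ns : ℕ → ℕ), Tendsto ns atTop atTop →
      ∀ (h : WeakSpace ℝ C(X, ℝ)),
      (MapClusterPt h atTop fun j => toWeak (f (φ (ns j)))) →
      ∀ k, ofW h (u k) = a k := by
    intro ns hns h hc k
    exact mapClusterPt_eq_of_tendsto
      ((cluster_eval (s := fun j => f (φ (ns j))) hc).1 (u k)) ((hak k).comp hns)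
  obtain ⟨g0, hg0⟩ := getcluster id
  refine ⟨φ, fun x => ofW g0 x, hφ, fun x => ?_⟩
  apply tendsto_of_subseq_tendsto
  intro ns hns
  obtain ⟨h, hc⟩ := getcluster ns
  have hEq : ofW h x = ofW g0 x := by
    refine eq_on_all (f := f) (u := u) (ofW h) (ofW g0) ?_ ?_ ?_ hdense x
    · exact fun x y hxy =>
        (cluster_eval (s := fun j => f (φ (ns j))) hc).2 x y fun j => hxy _
    · exact fun x y hxy =>
        (cluster_eval (s := fun j => f (φ j)) hg0).2 x y fun j => hxy _
    · exact fun k => (hval ns hns h hc k).trans (hval id tendsto_id g0 hg0 k).symm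
  obtain ⟨ms, -, hms⟩ := TopologicalSpace.FirstCountableTopology.tendsto_subseq
      ((cluster_eval (s := fun j => f (φ (ns j))) hc).1 x)
  refine ⟨ms, ?_⟩
  show Tendsto (fun n => f (φ (ns (ms n))) x) atTop (𝓝 (ofW g0 x))
  rw [← hEq]
  exact hms
end

section
/- Let X be a compact Hausdorff space, X₀ ⊆ X dense, and f : X → ℝ a bounded function that is not continuous at a point x ∈ X, where each member of a family A ⊆ C(X) can approximate f pointwise on finite sets (i.e., f lies in the pointwise closure of A). Then there exist sequences (fₙ) in A and (xₘ) in X₀ such that limₙ limₘ fₙ(xₘ) and limₘ limₙ fₙ(xₘ) both exist and are distinct. -/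
/-!
If every cluster value of `f` along the dense set `X₀` at every point `p` were `f p`, boundedness
would make `f` tend to `f p` along `X₀` at each `p`, and `f` would be continuous. So a discontinuous
`f` has a point `p` and a cluster value `ℓ ≠ f p` of `f` along `X₀` at `p`. One then chooses
alternately `fₙ ∈ A` close to `f` at `p` and at the earlier points `x₀, …, xₙ₋₁`, and `xₙ ∈ X₀`
near `p` with `f xₙ` close to `ℓ` and each earlier `fⱼ` close to `fⱼ p` at `xₙ`. Then
`limₙ limₘ fₙ xₘ = limₙ fₙ p = f p` while `limₘ limₙ fₙ xₘ = limₘ f xₘ = ℓ`.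
-/

open Filter Topology

theorem tendsto_of_eventually_dist_lt {ι Y : Type*} [PseudoMetricSpace Y] {l : Filter ι}
    {u : ι → Y} {c : Y} {δ : ι → ℝ} (h : ∀ᶠ i in l, dist (u i) c < δ i)
    (hδ : Tendsto δ l (𝓝 0)) : Tendsto u l (𝓝 c) :=
  tendsto_iff_dist_tendsto_zero.2 <|
    squeeze_zero' (Eventually.of_forall fun _ => dist_nonneg) (h.mono fun _ => le_of_lt) hδ

theorem exists_mem_forall_dist_lt_of_mem_closure {X Y : Type*} [PseudoMetricSpace Y]
    {S : Set (X → Y)} {f : X → Y} (hf : f ∈ closure S) (s : Finset X) {ε : ℝ} (hε : 0 < ε) :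
    ∃ g ∈ S, ∀ y ∈ s, dist (g y) (f y) < ε := by
  obtain ⟨g, hg, hgS⟩ := mem_closure_iff.1 hf ((s : Set X).pi fun y => Metric.ball (f y) ε)
    (isOpen_set_pi s.finite_toSet fun _ _ => Metric.isOpen_ball)
    (fun _ _ => Metric.mem_ball_self hε)
  exact ⟨g, hgS, hg⟩

theorem continuous_of_forall_tendsto_nhdsWithin {X Y : Type*} [TopologicalSpace X]
    [TopologicalSpace Y] [T3Space Y] {s : Set X} (hs : Dense s) {f : X → Y}
    (h : ∀ p, Tendsto f (𝓝[s] p) (𝓝 (f p))) : Continuous f := by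
  have hext : extendFrom s f = f := funext fun p => extendFrom_eq (hs p) (h p)
  exact hext ▸ continuous_extendFrom hs fun p => ⟨f p, h p⟩

theorem exists_mapClusterPt_ne_of_not_continuousAt {X Y : Type*} [TopologicalSpace X]
    [TopologicalSpace Y] [T3Space Y] {s : Set X} (hs : Dense s) {K : Set Y} (hK : IsCompact K)
    {f : X → Y} (hfK : ∀ y, f y ∈ K) {x : X} (hx : ¬ContinuousAt f x) :
    ∃ p ℓ, ℓ ≠ f p ∧ MapClusterPt ℓ (𝓝[s] p) f := by
  by_contra! hunique
  exact hx (continuous_of_forall_tendsto_nhdsWithin hs fun p =>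
    hK.tendsto_nhds_of_unique_mapClusterPt (Eventually.of_forall hfK)
      fun ℓ _ hℓ => not_imp_not.1 (hunique p ℓ) hℓ).continuousAt

structure InterleavingTerm (X Y : Type*) [TopologicalSpace X] [TopologicalSpace Y] where
  index : ℕ
  fn : C(X, Y)
  pt : X

namespace InterleavingTerm

variable {X Y : Type*} [TopologicalSpace X] [PseudoMetricSpace Y]
  (X₀ : Set X) (A : Set C(X, Y)) (f : X → Y) (p : X) (ℓ : Y)

noncomputable def tol (t : InterleavingTerm X Y) : ℝ := 1 / ((t.index : ℝ) + 1)

def Admissible (t : InterleavingTerm X Y) : Prop :=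
  t.fn ∈ A ∧ t.pt ∈ X₀ ∧ dist (t.fn p) (f p) < t.tol ∧ dist (f t.pt) ℓ < t.tol

def Follows (s t : InterleavingTerm X Y) : Prop :=
  s.index < t.index ∧ dist (t.fn s.pt) (f s.pt) < t.tol ∧ dist (s.fn t.pt) (s.fn p) < t.tol

variable {X₀ A f p ℓ}

theorem exists_admissible_follows (hf : f ∈ closure ((fun g : C(X, Y) => (g : X → Y)) '' A))
    (hℓ : MapClusterPt ℓ (𝓝[X₀] p) f) (s : Finset (InterleavingTerm X Y)) :
    ∃ t, Admissible X₀ A f p ℓ t ∧ ∀ u ∈ s, Follows f p u t := by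
  classical
  set k := s.sup index + 1
  have hε : (0 : ℝ) < 1 / ((k : ℝ) + 1) := by positivity
  obtain ⟨_, ⟨g, hgA, rfl⟩, hg⟩ :=
    exists_mem_forall_dist_lt_of_mem_closure hf (insert p (s.image pt)) hε
  have hnear : ∀ᶠ z in 𝓝[X₀] p, z ∈ X₀ ∧ ∀ u ∈ s, dist (u.fn z) (u.fn p) < 1 / ((k : ℝ) + 1) :=
    eventually_mem_nhdsWithin.and <| (eventually_all_finset s).2 fun u _ =>
      ((u.fn.continuous.tendsto p).eventually (Metric.ball_mem_nhds _ hε)).filter_mono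
        nhdsWithin_le_nhds
  obtain ⟨z, hzℓ, hzX₀, hz⟩ :=
    ((hℓ.frequently (Metric.ball_mem_nhds ℓ hε)).and_eventually hnear).exists
  refine ⟨⟨k, g, z⟩, ⟨hgA, hzX₀, hg p (Finset.mem_insert_self _ _), hzℓ⟩, fun u hu => ?_⟩
  exact ⟨Nat.lt_succ_of_le (Finset.le_sup hu),
    hg _ (Finset.mem_insert_of_mem (Finset.mem_image_of_mem _ hu)), hz u hu⟩

end InterleavingTerm

open InterleavingTerm in
theorem exists_seq_interleaving {X Y : Type*} [TopologicalSpace X] [PseudoMetricSpace Y]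
    {X₀ : Set X} {A : Set C(X, Y)} {f : X → Y} {p : X} {ℓ : Y}
    (hf : f ∈ closure ((fun g : C(X, Y) => (g : X → Y)) '' A))
    (hℓ : MapClusterPt ℓ (𝓝[X₀] p) f) :
    ∃ (fs : ℕ → C(X, Y)) (xs : ℕ → X), (∀ n, fs n ∈ A) ∧ (∀ m, xs m ∈ X₀) ∧
      (∀ n, Tendsto (fun m => fs n (xs m)) atTop (𝓝 (fs n p))) ∧
      (∀ m, Tendsto (fun n => fs n (xs m)) atTop (𝓝 (f (xs m)))) ∧
      Tendsto (fun n => fs n p) atTop (𝓝 (f p)) ∧ Tendsto (fun m => f (xs m)) atTop (𝓝 ℓ) := by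
  obtain ⟨t, hadm, hfol⟩ := exists_seq_of_forall_finset_exists _ _ fun s _ =>
    exists_admissible_follows hf hℓ s
  have htol : Tendsto (fun n => (t n).tol) atTop (𝓝 0) :=
    tendsto_one_div_add_atTop_nhds_zero_nat.comp
      (StrictMono.tendsto_atTop fun m n hmn => (hfol m n hmn).1)
  refine ⟨fun n => (t n).fn, fun m => (t m).pt, fun n => (hadm n).1, fun m => (hadm m).2.1,
    fun n => ?_, fun m => ?_, ?_, ?_⟩
  · exact tendsto_of_eventually_dist_lt
      ((eventually_gt_atTop n).mono fun m hm => (hfol n m hm).2.2) htol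
  · exact tendsto_of_eventually_dist_lt
      ((eventually_gt_atTop m).mono fun n hn => (hfol m n hn).2.1) htol
  · exact tendsto_of_eventually_dist_lt (Eventually.of_forall fun n => (hadm n).2.2.1) htol
  · exact tendsto_of_eventually_dist_lt (Eventually.of_forall fun m => (hadm m).2.2.2) htol

theorem discontinuous_pointwise_limit_gives_double_limit_failure_general
    {X : Type*} [TopologicalSpace X]
    (X₀ : Set X) (hX₀ : Dense X₀)
    (A : Set C(X, ℝ)) (f : X → ℝ)
    (hbdd : ∃ r : ℝ, ∀ y, |f y| ≤ r)
    (x : X) (hx : ¬ ContinuousAt f x)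
    (hcl : f ∈ closure ((fun g : C(X, ℝ) => (g : X → ℝ)) '' A)) :
    ∃ (fs : ℕ → C(X, ℝ)) (xs : ℕ → X),
      (∀ n, fs n ∈ A) ∧ (∀ m, xs m ∈ X₀) ∧
      ∃ (a b : ℕ → ℝ) (L₁ L₂ : ℝ),
        (∀ n, Tendsto (fun m => fs n (xs m)) atTop (𝓝 (a n))) ∧
        (∀ m, Tendsto (fun n => fs n (xs m)) atTop (𝓝 (b m))) ∧
        Tendsto a atTop (𝓝 L₁) ∧ Tendsto b atTop (𝓝 L₂) ∧ L₁ ≠ L₂ := by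
  obtain ⟨r, hr⟩ := hbdd
  obtain ⟨p, ℓ, hℓp, hℓ⟩ := exists_mapClusterPt_ne_of_not_continuousAt hX₀ isCompact_Icc
    (fun y => abs_le.1 (hr y)) hx
  obtain ⟨fs, xs, hfs, hxs, hrow, hcol, hlim₁, hlim₂⟩ := exists_seq_interleaving hcl hℓ
  exact ⟨fs, xs, hfs, hxs, _, _, _, _, hrow, hcol, hlim₁, hlim₂, hℓp.symm⟩

/-- The interleaving construction in the proof of Grothendieck's criterion: if a bounded
function `f` in the pointwise closure of `A ⊆ C(X)` fails to be continuous at some point,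
then there are a sequence in `A` and a sequence in a dense set `X₀` whose two iterated
limits exist and differ. -/
theorem discontinuous_pointwise_limit_gives_double_limit_failure
    {X : Type*} [TopologicalSpace X] [CompactSpace X] [T2Space X]
    (X₀ : Set X) (hX₀ : Dense X₀)
    (A : Set C(X, ℝ)) (f : X → ℝ)
    (hbdd : ∃ r : ℝ, ∀ y, |f y| ≤ r)
    (x : X) (hx : ¬ ContinuousAt f x)
    (hcl : f ∈ closure ((fun g : C(X, ℝ) => (g : X → ℝ)) '' A)) :
    ∃ (fs : ℕ → C(X, ℝ)) (xs : ℕ → X),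
      (∀ n, fs n ∈ A) ∧ (∀ m, xs m ∈ X₀) ∧
      ∃ (a b : ℕ → ℝ) (L₁ L₂ : ℝ),
        (∀ n, Tendsto (fun m => fs n (xs m)) atTop (𝓝 (a n))) ∧
        (∀ m, Tendsto (fun n => fs n (xs m)) atTop (𝓝 (b m))) ∧
        Tendsto a atTop (𝓝 L₁) ∧ Tendsto b atTop (𝓝 L₂) ∧ L₁ ≠ L₂ :=
  discontinuous_pointwise_limit_gives_double_limit_failure_general X₀ hX₀ A f hbdd x hx hcl
end
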